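/- Let Y be a functional extension of X, endowed with the S-topology. Then for every A ⊆ X, the closure of A in Y equals *A; in particular, every set *A is clopen in Y and X is dense in Y. -/
import Mathlib


attribute [local instance] Classical.propDecidable

/-- A functional extension of `X`: a proper superset `Y ⊇ X` (given via an injective,
non-surjective inclusion) with two designated distinct elements `0, 1 ∈ X`, together with
a distinguished extension `star f : Y → Y` of every `f : X → X`, preserving compositions
and equalizers, and with directed Puritz preorder. -/
structure FunctionalExtension (X Y : Type*) where
  zero : X
  one : X
  zero_ne_one : zero ≠ one
  incl : X → Y
  incl_injective : Function.Injective incl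
  proper : ¬ Function.Surjective incl
  star : (X → X) → Y → Y
  star_incl : ∀ (f : X → X) (x : X), star f (incl x) = incl (f x)
  comp : ∀ f g : X → X, star (g ∘ f) = star g ∘ star f
  equ : ∀ f g : X → X,
    star (fun x => if f x = g x then one else zero) =
      fun ξ => if star f ξ = star g ξ then incl one else incl zero
  dir : ∀ ξ η : Y, ∃ (p₁ p₂ : X → X) (ζ : Y), star p₁ ζ = ξ ∧ star p₂ ζ = η

namespace FunctionalExtension

variable {X Y : Type*}

/-- The star-extension `*A ⊆ Y` of a subset `A ⊆ X`:
the set where the extension of the characteristic function of `A` takes the value `1`. -/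
def sets (E : FunctionalExtension X Y) (A : Set X) : Set Y :=
  {ξ | E.star (fun x => if x ∈ A then E.one else E.zero) ξ = E.incl E.one}

/-- The S-topology on `Y`: the topology with basis `{*A : A ⊆ X}`. -/
def sTopology (E : FunctionalExtension X Y) : TopologicalSpace Y :=
  TopologicalSpace.generateFrom (Set.range E.sets)

end FunctionalExtension

namespace FunctionalExtension

variable {X Y : Type*} (E : FunctionalExtension X Y)

lemma star_const_one : E.star (fun _ => E.one) = fun _ => E.incl E.one := by
  have h := E.equ id id
  have h1 : (fun x : X => if id x = id x then E.one else E.zero) = (fun _ : X => E.one) := by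
    funext x; simp
  have h2 : (fun ξ : Y => if E.star id ξ = E.star id ξ then E.incl E.one else E.incl E.zero)
      = (fun _ : Y => E.incl E.one) := by funext ξ; simp
  rw [h1, h2] at h; exact h

lemma star_const (c : X) : E.star (fun _ => c) = fun _ => E.incl c := by
  have h : E.star ((fun _ : X => c) ∘ (fun _ : X => E.one))
      = E.star (fun _ : X => c) ∘ E.star (fun _ : X => E.one) := E.comp _ _
  rw [E.star_const_one] at h
  have h2 : ((fun _ : X => c) ∘ (fun _ : X => E.one)) = (fun _ : X => c) := rfl
  rw [h2] at h
  funext ξ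
  calc E.star (fun _ => c) ξ
      = E.star (fun _ => c) (E.incl E.one) := congrFun h ξ
    _ = E.incl c := E.star_incl _ _

lemma star_id : E.star id = id := by
  funext ξ
  obtain ⟨p₁, p₂, ζ, h1, h2⟩ := E.dir ξ ξ
  have h := E.comp p₁ id
  rw [Function.id_comp] at h
  calc E.star id ξ = (E.star id ∘ E.star p₁) ζ := by rw [← h1]; rfl
    _ = E.star p₁ ζ := (congrFun h ζ).symm
    _ = ξ := h1

lemma sets_eq_equalizer (f g : X → X) (A : Set X) (h : ∀ x, x ∈ A ↔ f x = g x) :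
    E.sets A = {ξ | E.star f ξ = E.star g ξ} := by
  have hχ : (fun x => if x ∈ A then E.one else E.zero)
      = (fun x => if f x = g x then E.one else E.zero) := by
    funext x; exact if_congr (h x) rfl rfl
  ext ξ
  simp only [sets, Set.mem_setOf_eq, hχ, E.equ f g]
  constructor
  · intro hξ
    by_contra hc
    rw [if_neg hc] at hξ
    exact E.zero_ne_one (E.incl_injective hξ)
  · intro hξ; rw [if_pos hξ]

lemma sets_univ : E.sets Set.univ = Set.univ := by
  have h := E.sets_eq_equalizer id id Set.univ (by intro x; simp)
  rw [h]; ext ξ; simp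

lemma sets_empty : E.sets (∅ : Set X) = ∅ := by
  have h := E.sets_eq_equalizer (fun _ => E.zero) (fun _ => E.one) ∅ (by
    intro x; simp [E.zero_ne_one])
  rw [h]
  ext ξ
  simp only [Set.mem_setOf_eq, E.star_const, Set.mem_empty_iff_false, iff_false]
  intro hc
  exact E.zero_ne_one (E.incl_injective hc)

lemma mem_sets_incl (A : Set X) (x : X) : E.incl x ∈ E.sets A ↔ x ∈ A := by
  simp only [sets, Set.mem_setOf_eq, E.star_incl]
  constructor
  · intro h
    by_contra hx
    rw [if_neg hx] at h
    exact E.zero_ne_one (E.incl_injective h)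
  · intro h; rw [if_pos h]

lemma star_fix (A : Set X) (ρ : X → X) (h : ∀ x, x ∈ A ↔ ρ x = x) :
    ∀ ξ ∈ E.sets A, E.star ρ ξ = ξ := by
  intro ξ hξ
  rw [E.sets_eq_equalizer ρ id A (by simpa using h)] at hξ
  simpa [E.star_id] using hξ

lemma sets_preimage (f : X → X) (A : Set X) :
    E.sets (f ⁻¹' A) = E.star f ⁻¹' E.sets A := by
  have hχ : (fun x => if x ∈ f ⁻¹' A then E.one else E.zero)
      = (fun x => if x ∈ A then E.one else E.zero) ∘ f := by
    funext x; exact if_congr Set.mem_preimage rfl rfl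
  ext ξ
  show E.star (fun x => if x ∈ f ⁻¹' A then E.one else E.zero) ξ = E.incl E.one ↔
    E.star f ξ ∈ E.sets A
  rw [hχ, E.comp]
  rfl

lemma sets_mono {A B : Set X} (hAB : A ⊆ B) : E.sets A ⊆ E.sets B := by
  rcases A.eq_empty_or_nonempty with rfl | ⟨c₀, hc₀⟩
  · rw [E.sets_empty]; exact Set.empty_subset _
  · set ρ : X → X := fun x => if x ∈ A then x else c₀ with hρ
    have hfix : ∀ x, x ∈ A ↔ ρ x = x := by
      intro x
      constructor
      · intro hx; simp [hρ, hx]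
      · intro hx
        by_contra hx'
        rw [hρ] at hx; simp only [if_neg hx'] at hx
        exact hx' (hx ▸ hc₀)
    have hpre : ρ ⁻¹' B = Set.univ := by
      ext x
      simp only [Set.mem_preimage, Set.mem_univ, iff_true, hρ]
      by_cases hx : x ∈ A
      · rw [if_pos hx]; exact hAB hx
      · rw [if_neg hx]; exact hAB hc₀
    intro ξ hξ
    have h1 : E.star ρ ξ = ξ := E.star_fix A ρ hfix ξ hξ
    have h2 : ξ ∈ E.star ρ ⁻¹' E.sets B := by
      rw [← E.sets_preimage, hpre, E.sets_univ]; trivial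
    rw [Set.mem_preimage, h1] at h2
    exact h2

lemma sets_inter (A B : Set X) : E.sets (A ∩ B) = E.sets A ∩ E.sets B := by
  apply subset_antisymm
  · exact Set.subset_inter (E.sets_mono Set.inter_subset_left)
      (E.sets_mono Set.inter_subset_right)
  · by_cases hAB : A ⊆ B
    · rw [Set.inter_eq_left.mpr hAB]
      exact Set.inter_subset_left
    · obtain ⟨x₀, hx₀A, hx₀B⟩ : ∃ x₀, x₀ ∈ A ∧ x₀ ∉ B := by
        rw [Set.not_subset] at hAB; exact hAB
      set ρ : X → X := fun x => if x ∈ A then x else x₀ with hρ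
      have hfix : ∀ x, x ∈ A ↔ ρ x = x := by
        intro x
        constructor
        · intro hx; simp [hρ, hx]
        · intro hx
          by_contra hx'
          rw [hρ] at hx; simp only [if_neg hx'] at hx
          exact hx' (hx ▸ hx₀A)
      have hpre : ρ ⁻¹' B = A ∩ B := by
        ext x
        simp only [Set.mem_preimage, Set.mem_inter_iff, hρ]
        by_cases hx : x ∈ A
        · rw [if_pos hx]; simp [hx]
        · rw [if_neg hx]; simp [hx, hx₀B]
      rintro ξ ⟨hξA, hξB⟩
      have h1 : E.star ρ ξ = ξ := E.star_fix A ρ hfix ξ hξA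
      rw [← hpre, E.sets_preimage, Set.mem_preimage, h1]
      exact hξB

lemma star_chi_values (A : Set X) (ξ : Y) :
    E.star (fun x => if x ∈ A then E.one else E.zero) ξ = E.incl E.one ∨
    E.star (fun x => if x ∈ A then E.one else E.zero) ξ = E.incl E.zero := by
  have hχ : (fun x => if x ∈ A then E.one else E.zero)
      = (fun x => if (fun y => if y ∈ A then E.one else E.zero) x = (fun _ => E.one) x
          then E.one else E.zero) := by
    funext x
    by_cases hx : x ∈ A
    · simp [hx]
    · simp [hx, E.zero_ne_one]
  have h := congrFun (E.equ (fun y => if y ∈ A then E.one else E.zero) (fun _ => E.one)) ξ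
  rw [← hχ] at h
  rw [E.star_const_one] at h
  by_cases hc : E.star (fun y => if y ∈ A then E.one else E.zero) ξ = E.incl E.one
  · left; exact hc
  · rw [if_neg hc] at h; right; exact h

lemma sets_compl (A : Set X) : E.sets Aᶜ = (E.sets A)ᶜ := by
  have h := E.sets_eq_equalizer (fun x => if x ∈ A then E.one else E.zero)
    (fun _ => E.zero) Aᶜ (by
      intro x
      by_cases hx : x ∈ A
      · simp [hx, E.zero_ne_one.symm]
      · simp [hx])
  rw [h]
  ext ξ
  simp only [Set.mem_setOf_eq, E.star_const, Set.mem_compl_iff, sets]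
  rcases E.star_chi_values A ξ with hv | hv <;> rw [hv]
  · constructor
    · intro hc; exact absurd (E.incl_injective hc).symm E.zero_ne_one
    · intro hc; exact absurd rfl hc
  · constructor
    · intro _ hc; exact E.zero_ne_one (E.incl_injective hc)
    · intro _; rfl

lemma isTopologicalBasis :
    @TopologicalSpace.IsTopologicalBasis Y E.sTopology (Set.range E.sets) := by
  letI := E.sTopology
  refine ⟨?_, ?_, rfl⟩
  · rintro t₁ ⟨A, rfl⟩ t₂ ⟨B, rfl⟩ ξ hξ
    exact ⟨E.sets (A ∩ B), ⟨A ∩ B, rfl⟩, by rw [E.sets_inter]; exact hξ,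
      by rw [E.sets_inter]⟩
  · exact Set.sUnion_eq_univ_iff.mpr fun ξ =>
      ⟨Set.univ, ⟨Set.univ, E.sets_univ⟩, trivial⟩

lemma isOpen_sets (A : Set X) : @IsOpen Y E.sTopology (E.sets A) :=
  TopologicalSpace.GenerateOpen.basic _ ⟨A, rfl⟩

lemma isClosed_sets (A : Set X) : @IsClosed Y E.sTopology (E.sets A) := by
  letI := E.sTopology
  rw [← isOpen_compl_iff, ← E.sets_compl]
  exact E.isOpen_sets Aᶜ

end FunctionalExtension

/-- In the S-topology on `Y`: the closure of `A ⊆ X` equals `*A`; every `*A` is clopen;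
and `X` is dense in `Y`. -/
theorem stmt6 {X Y : Type*} (E : FunctionalExtension X Y) :
    (∀ A : Set X, @closure Y E.sTopology (E.incl '' A) = E.sets A) ∧
    (∀ A : Set X, @IsClopen Y E.sTopology (E.sets A)) ∧
    @Dense Y E.sTopology (Set.range E.incl) := by
  letI := E.sTopology
  have hclopen : ∀ A : Set X, IsClopen (E.sets A) := fun A =>
    ⟨E.isClosed_sets A, E.isOpen_sets A⟩
  have hclosure : ∀ A : Set X, closure (E.incl '' A) = E.sets A := by
    intro A
    apply subset_antisymm
    · refine closure_minimal ?_ (E.isClosed_sets A)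
      rintro _ ⟨x, hx, rfl⟩
      exact (E.mem_sets_incl A x).mpr hx
    · intro ξ hξ
      rw [E.isTopologicalBasis.mem_closure_iff]
      rintro o ⟨B, rfl⟩ hξB
      have hmem : ξ ∈ E.sets (A ∩ B) := by rw [E.sets_inter]; exact ⟨hξ, hξB⟩
      have hne : (A ∩ B).Nonempty := by
        by_contra h
        rw [Set.not_nonempty_iff_eq_empty] at h
        rw [h, E.sets_empty] at hmem
        exact hmem
      obtain ⟨x, hxA, hxB⟩ := hne
      exact ⟨E.incl x, (E.mem_sets_incl B x).mpr hxB, ⟨x, hxA, rfl⟩⟩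
  refine ⟨hclosure, hclopen, ?_⟩
  rw [dense_iff_closure_eq, ← Set.image_univ, hclosure, E.sets_univ]
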